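/- Let R be a G-graded ring, P a graded weakly 2-absorbing ideal of R, and K a graded ideal of R with K ⊆ P. Then P/K is a graded weakly 2-absorbing ideal of the quotient graded ring R/K. -/

import Mathlib

variable {G R : Type*} [AddGroup G] [DecidableEq G] [Ring R]

/-- `x` is a homogeneous element of the `G`-graded ring `R`. -/
def IsHomog (𝒜 : G → AddSubgroup R) (x : R) : Prop := ∃ g, x ∈ 𝒜 g

/-- A two-sided ideal is graded if it contains all homogeneous components of its elements. -/
def IsGradedIdeal (𝒜 : G → AddSubgroup R) [GradedRing 𝒜] (P : TwoSidedIdeal R) : Prop :=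
  ∀ a ∈ P, ∀ g : G, (DirectSum.decompose 𝒜 a g : R) ∈ P

/-- Graded weakly prime: a proper graded ideal `P` such that `0 ≠ IJ ⊆ P` for graded
ideals `I, J` implies `I ⊆ P` or `J ⊆ P`. -/
def IsGradedWeaklyPrime (𝒜 : G → AddSubgroup R) [GradedRing 𝒜] (P : TwoSidedIdeal R) : Prop :=
  P ≠ ⊤ ∧ IsGradedIdeal 𝒜 P ∧
    ∀ I J : TwoSidedIdeal R, IsGradedIdeal 𝒜 I → IsGradedIdeal 𝒜 J →
      (∃ a ∈ I, ∃ b ∈ J, a * b ≠ 0) → (∀ a ∈ I, ∀ b ∈ J, a * b ∈ P) →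
      I ≤ P ∨ J ≤ P

/-- Graded weakly 2-absorbing: a proper graded ideal `P` such that for homogeneous `x, y, z`,
`0 ≠ xRyRz ⊆ P` implies `xy ∈ P` or `yz ∈ P` or `xz ∈ P`. -/
def IsGradedWeakly2Absorbing (𝒜 : G → AddSubgroup R) [GradedRing 𝒜] (P : TwoSidedIdeal R) : Prop :=
  P ≠ ⊤ ∧ IsGradedIdeal 𝒜 P ∧
    ∀ x y z : R, IsHomog 𝒜 x → IsHomog 𝒜 y → IsHomog 𝒜 z →
      (∃ r s : R, x * r * y * s * z ≠ 0) → (∀ r s : R, x * r * y * s * z ∈ P) →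
      x * y ∈ P ∨ y * z ∈ P ∨ x * z ∈ P

/-! Everything transfers along a surjective ring map `f : R → S` that maps each `R_g` onto `S_g`
and whose kernel lies in `P`: homogeneous elements of `S` lift to homogeneous elements of `R`,
and an element of `R` lies in `P` exactly when its image lies in `Q = f(P)`. The quotient map
`R → R/K` is such a map because `K ⊆ P`. -/

theorem DirectSum.decompose_map_apply {ι M N F : Type*} [DecidableEq ι] [AddCommGroup M]
    [AddCommGroup N] [FunLike F M N] [AddMonoidHomClass F M N]
    (𝒜 : ι → AddSubgroup M) [DirectSum.Decomposition 𝒜]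
    (ℬ : ι → AddSubgroup N) [DirectSum.Decomposition ℬ] (f : F)
    (hf : ∀ i, ∀ m ∈ 𝒜 i, f m ∈ ℬ i) (m : M) (i : ι) :
    (DirectSum.decompose ℬ (f m) i : N) = f (DirectSum.decompose 𝒜 m i) := by
  induction m using DirectSum.Decomposition.inductionOn 𝒜 with
  | zero => simp
  | @homogeneous j m =>
    obtain rfl | hji := eq_or_ne j i
    · rw [DirectSum.decompose_of_mem_same ℬ (hf j m m.2),
        DirectSum.decompose_of_mem_same 𝒜 m.2]
    · rw [DirectSum.decompose_of_mem_ne ℬ (hf j m m.2) hji,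
        DirectSum.decompose_of_mem_ne 𝒜 m.2 hji, map_zero]
  | add m m' hm hm' =>
    simp only [map_add, DirectSum.decompose_add, DirectSum.add_apply, AddSubgroup.coe_add, hm, hm']

theorem IsHomog.exists_preimage {ι S F : Type*} [Ring S] [FunLike F R S]
    [AddMonoidHomClass F R S] {𝒜 : ι → AddSubgroup R} {ℬ : ι → AddSubgroup S} {f : F}
    (hℬ : ∀ i, ℬ i = (𝒜 i).map (f : R →+ S)) {y : S}
    (hy : IsHomog ℬ y) : ∃ x, IsHomog 𝒜 x ∧ f x = y := by
  obtain ⟨i, hyi⟩ := hy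
  rw [hℬ] at hyi
  obtain ⟨x, hx, rfl⟩ := hyi
  exact ⟨x, ⟨i, hx⟩, rfl⟩

section SurjectiveImage

variable {S : Type*} [Ring S] {𝒜 : G → AddSubgroup R} [GradedRing 𝒜]
  {ℬ : G → AddSubgroup S} [GradedRing ℬ] {f : R →+* S}
  {P : TwoSidedIdeal R} {Q : TwoSidedIdeal S}

theorem TwoSidedIdeal.mem_of_apply_mem (hQ : ∀ q, q ∈ Q ↔ ∃ p ∈ P, f p = q)
    (hker : ∀ r, f r = 0 → r ∈ P) {r : R} (hr : f r ∈ Q) : r ∈ P := by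
  obtain ⟨p, hp, hpr⟩ := (hQ _).1 hr
  have hdiff : p - r ∈ P := hker _ (by rw [map_sub, hpr, sub_self])
  simpa using P.sub_mem hp hdiff

theorem TwoSidedIdeal.ne_top_of_image (hQ : ∀ q, q ∈ Q ↔ ∃ p ∈ P, f p = q)
    (hker : ∀ r, f r = 0 → r ∈ P) (hP : P ≠ ⊤) : Q ≠ ⊤ := by
  intro hQtop
  refine hP (P.one_mem_iff.1 (TwoSidedIdeal.mem_of_apply_mem hQ hker ?_))
  rw [map_one]
  exact Q.one_mem_iff.2 hQtop

theorem IsGradedIdeal.image (hℬ : ∀ g, ℬ g = (𝒜 g).map f.toAddMonoidHom)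
    (hQ : ∀ q, q ∈ Q ↔ ∃ p ∈ P, f p = q) (hP : IsGradedIdeal 𝒜 P) : IsGradedIdeal ℬ Q := by
  have hf : ∀ g, ∀ m ∈ 𝒜 g, f m ∈ ℬ g := fun g m hm => by
    rw [hℬ]; exact ⟨m, hm, rfl⟩
  intro q hq g
  obtain ⟨p, hp, rfl⟩ := (hQ q).1 hq
  rw [DirectSum.decompose_map_apply 𝒜 ℬ f hf]
  exact (hQ _).2 ⟨_, hP p hp g, rfl⟩

theorem IsGradedWeakly2Absorbing.image (hf : Function.Surjective f)
    (hℬ : ∀ g, ℬ g = (𝒜 g).map f.toAddMonoidHom)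
    (hQ : ∀ q, q ∈ Q ↔ ∃ p ∈ P, f p = q) (hker : ∀ r, f r = 0 → r ∈ P)
    (hP : IsGradedWeakly2Absorbing 𝒜 P) : IsGradedWeakly2Absorbing ℬ Q := by
  obtain ⟨hPtop, hPgr, hPabs⟩ := hP
  have map_mem : ∀ p ∈ P, f p ∈ Q := fun p hp => (hQ _).2 ⟨p, hp, rfl⟩
  refine ⟨TwoSidedIdeal.ne_top_of_image hQ hker hPtop, hPgr.image hℬ hQ, ?_⟩
  intro x y z hx hy hz ⟨r, s, hne⟩ hall
  obtain ⟨x, hx', rfl⟩ := hx.exists_preimage (f := f) hℬ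
  obtain ⟨y, hy', rfl⟩ := hy.exists_preimage (f := f) hℬ
  obtain ⟨z, hz', rfl⟩ := hz.exists_preimage (f := f) hℬ
  obtain ⟨r, rfl⟩ := hf r
  obtain ⟨s, rfl⟩ := hf s
  have hne' : x * r * y * s * z ≠ 0 := fun h => hne (by simp only [← map_mul, h, map_zero])
  have hall' : ∀ r s, x * r * y * s * z ∈ P := fun r s =>
    TwoSidedIdeal.mem_of_apply_mem hQ hker (by simpa only [map_mul] using hall (f r) (f s))
  simp only [← map_mul]
  rcases hPabs x y z hx' hy' hz' ⟨r, s, hne'⟩ hall' with h | h | h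
  · exact .inl (map_mem _ h)
  · exact .inr (.inl (map_mem _ h))
  · exact .inr (.inr (map_mem _ h))

end SurjectiveImage

theorem stmt5_general (𝒜 : G → AddSubgroup R) [GradedRing 𝒜] (P K : TwoSidedIdeal R)
    (hP : IsGradedWeakly2Absorbing 𝒜 P) (hKP : K ≤ P)
    (ℬ : G → AddSubgroup K.ringCon.Quotient)
    (hℬ : ∀ g, ℬ g = (𝒜 g).map (RingCon.mk' K.ringCon).toAddMonoidHom)
    [GradedRing ℬ]
    (Q : TwoSidedIdeal K.ringCon.Quotient)
    (hQ : ∀ q, q ∈ Q ↔ ∃ p ∈ P, RingCon.mk' K.ringCon p = q) :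
    IsGradedWeakly2Absorbing ℬ Q := by
  have hker : ∀ r, RingCon.mk' K.ringCon r = 0 → r ∈ P := fun r hr =>
    hKP ((K.mem_iff r).2 ((RingCon.eq _).1 hr))
  exact hP.image (RingCon.mk'_surjective _) hℬ hQ hker

/-- If `P` is a graded weakly 2-absorbing ideal of `R` and `K` is a graded ideal with
`K ⊆ P`, then `P/K` is a graded weakly 2-absorbing ideal of the quotient graded ring `R/K`,
where `R/K` is graded by `(R/K)_g = (R_g + K)/K` (the image of `R_g`). -/
theorem stmt5 (𝒜 : G → AddSubgroup R) [GradedRing 𝒜] (P K : TwoSidedIdeal R)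
    (hP : IsGradedWeakly2Absorbing 𝒜 P) (hKgr : IsGradedIdeal 𝒜 K) (hKP : K ≤ P)
    (ℬ : G → AddSubgroup K.ringCon.Quotient)
    (hℬ : ∀ g, ℬ g = (𝒜 g).map (RingCon.mk' K.ringCon).toAddMonoidHom)
    [GradedRing ℬ]
    (Q : TwoSidedIdeal K.ringCon.Quotient)
    (hQ : ∀ q, q ∈ Q ↔ ∃ p ∈ P, RingCon.mk' K.ringCon p = q) :
    IsGradedWeakly2Absorbing ℬ Q :=
  stmt5_general 𝒜 P K hP hKP ℬ hℬ Q hQ
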